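/- arXiv:2502.06795 — 2 statements merged into one kernel-verified Lean document; each statement's English description precedes it below -/
import Mathlib

section
/- For each fixed x ∈ ℝ, n ∈ ℕ with n ≥ 1, and 0 < β < 1, the tail sum of the symmetrized density satisfies: the sum of Φ(nx − k) over all integers k with |k/n − x| ≥ 1/n^β is at most ((q + 1/q)/2) e^{2λ} e^{−λ(n^{1−β} − 1)} / (1 − e^{−λ}), up to an absolute constant. In particular, this tail sum tends to 0 as n → ∞. -/
noncomputable def g (q lam x : ℝ) : ℝ :=
  (Real.exp (lam * x) - q * Real.exp (-(lam * x))) /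
    (Real.exp (lam * x) + q * Real.exp (-(lam * x)))

noncomputable def M (q lam x : ℝ) : ℝ := (g q lam (x + 1) - g q lam (x - 1)) / 4

noncomputable def Phi (q lam x : ℝ) : ℝ := (M q lam x + M (1 / q) lam x) / 2

/-! Since `g (1/q) λ x = -g q λ (-x)`, `Phi` is even, and `g q λ x = 1 - 2q/(e^{2λx} + q)` shows
`Phi y ≤ C e^{-2λ|y|}`. On the tail `|nx - k| ≥ n^{1-β}` one factor `e^{-λ|nx-k|}` is at most
`e^{-λ n^{1-β}}`, while the other sums over `k ∈ ℤ` to at most `e^λ ∑ₖ e^{-λ|k|}`, uniformly in `nx`. -/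

open Real Filter

lemma g_eq_one_sub (q lam x : ℝ) (hq : 0 ≤ q) :
    g q lam x = 1 - 2 * (q / (exp (2 * lam * x) + q)) := by
  have hsq : exp (2 * lam * x) = exp (lam * x) ^ 2 := by rw [← exp_nat_mul]; ring_nf
  have hpos : 0 < exp (lam * x) := exp_pos _
  rw [g, hsq, exp_neg]
  field_simp
  ring

lemma g_inv_eq_neg (q lam x : ℝ) (hq : 0 < q) : g (1 / q) lam x = -g q lam (-x) := by
  have hpos : 0 < exp (lam * x) := exp_pos _
  simp only [g, mul_neg, neg_neg, exp_neg]
  field_simp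
  ring

lemma M_inv_eq (q lam y : ℝ) (hq : 0 < q) : M (1 / q) lam y = M q lam (-y) := by
  simp only [M, g_inv_eq_neg q lam _ hq]
  ring_nf

lemma Phi_neg (q lam y : ℝ) (hq : 0 < q) : Phi q lam (-y) = Phi q lam y := by
  simp only [Phi, M_inv_eq q lam _ hq, neg_neg]
  ring

lemma M_eq (q lam y : ℝ) (hq : 0 ≤ q) :
    M q lam y = (q / (exp (2 * lam * (y - 1)) + q) - q / (exp (2 * lam * (y + 1)) + q)) / 2 := by
  rw [M, g_eq_one_sub q lam _ hq, g_eq_one_sub q lam _ hq]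
  ring

lemma M_nonneg (q lam y : ℝ) (hq : 0 ≤ q) (hlam : 0 ≤ lam) : 0 ≤ M q lam y := by
  rw [M_eq q lam y hq]
  have hmono : exp (2 * lam * (y - 1)) ≤ exp (2 * lam * (y + 1)) :=
    exp_le_exp.2 (by nlinarith)
  have := div_le_div_of_nonneg_left hq (by positivity) (by linarith : exp (2 * lam * (y - 1)) + q ≤ exp (2 * lam * (y + 1)) + q)
  linarith

lemma M_le (q lam y : ℝ) (hq : 0 ≤ q) :
    M q lam y ≤ q / 2 * exp (2 * lam) * exp (-(2 * lam * y)) := by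
  rw [M_eq q lam y hq]
  have hleft : q / (exp (2 * lam * (y - 1)) + q) ≤ q / exp (2 * lam * (y - 1)) :=
    div_le_div_of_nonneg_left hq (exp_pos _) (le_add_of_nonneg_right hq)
  have hright : 0 ≤ q / (exp (2 * lam * (y + 1)) + q) := by positivity
  have hexp : q / exp (2 * lam * (y - 1)) = q * exp (2 * lam) * exp (-(2 * lam * y)) := by
    rw [div_eq_mul_inv, ← exp_neg, mul_assoc q (exp _), ← exp_add]
    ring_nf
  linarith

lemma Phi_nonneg (q lam y : ℝ) (hq : 0 < q) (hlam : 0 ≤ lam) : 0 ≤ Phi q lam y := by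
  have := M_nonneg q lam y hq.le hlam
  have := M_nonneg (1 / q) lam y (by positivity) hlam
  rw [Phi]
  linarith

lemma Phi_le (q lam y : ℝ) (hq : 0 < q) :
    Phi q lam y ≤ (q + 1 / q) / 4 * exp (2 * lam) * exp (-(2 * lam * |y|)) := by
  wlog hy : 0 ≤ y generalizing y
  · simpa [Phi_neg q lam y hq, abs_neg] using this (-y) (by linarith)
  have h1 := M_le q lam y hq.le
  have h2 := M_le (1 / q) lam y (by positivity)
  rw [Phi, abs_of_nonneg hy]
  linarith

section ExpTail

variable {μ : ℝ}

lemma summable_exp_neg_mul_abs_int (hμ : 0 < μ) :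
    Summable fun k : ℤ => exp (-(μ * |(k : ℝ)|)) := by
  have hgeom : Summable fun n : ℕ => exp (n * -μ) := summable_exp_nat_mul_iff.2 (by linarith)
  refine Summable.of_nat_of_neg ?_ ?_ <;>
    simpa [mul_comm] using hgeom

lemma exp_neg_mul_abs_sub_le (hμ : 0 ≤ μ) (y : ℝ) (k : ℤ) :
    exp (-(μ * |y - k|)) ≤ exp μ * exp (-(μ * |((k - ⌊y⌋ : ℤ) : ℝ)|)) := by
  have hdist : |((k - ⌊y⌋ : ℤ) : ℝ)| ≤ |y - k| + 1 := by
    push_cast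
    have := Int.floor_le y
    have := Int.lt_floor_add_one y
    rw [abs_le]
    constructor <;> cases abs_cases (y - k) <;> linarith
  rw [← exp_add]
  exact exp_le_exp.2 (by nlinarith)

lemma summable_exp_neg_mul_abs_sub (hμ : 0 < μ) (y : ℝ) :
    Summable fun k : ℤ => exp (-(μ * |y - k|)) :=
  .of_nonneg_of_le (fun _ => (exp_pos _).le) (exp_neg_mul_abs_sub_le hμ.le y)
    (((summable_exp_neg_mul_abs_int hμ).comp_injective (sub_left_injective)).mul_left _)

lemma tsum_exp_neg_mul_abs_sub_le (hμ : 0 < μ) (y : ℝ) :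
    ∑' k : ℤ, exp (-(μ * |y - k|)) ≤ exp μ * ∑' k : ℤ, exp (-(μ * |(k : ℝ)|)) := by
  have hshift := (summable_exp_neg_mul_abs_int hμ).comp_injective (sub_left_injective (b := ⌊y⌋))
  calc ∑' k : ℤ, exp (-(μ * |y - k|))
      ≤ ∑' k : ℤ, exp μ * exp (-(μ * |((k - ⌊y⌋ : ℤ) : ℝ)|)) :=
        Summable.tsum_le_tsum (exp_neg_mul_abs_sub_le hμ.le y)
          (summable_exp_neg_mul_abs_sub hμ y) (hshift.mul_left _)
    _ = exp μ * ∑' k : ℤ, exp (-(μ * |(k : ℝ)|)) := by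
        rw [tsum_mul_left]
        exact congrArg _ ((Equiv.subRight ⌊y⌋).tsum_eq fun k : ℤ => exp (-(μ * |(k : ℝ)|)))

lemma tsum_subtype_le_of_le_exp_neg_two_mul {f : ℤ → ℝ} {C y T : ℝ} (hμ : 0 < μ)
    (hf0 : ∀ k, 0 ≤ f k) (hf : ∀ k, f k ≤ C * exp (-(2 * μ * |y - k|)))
    (s : Set ℤ) (hs : ∀ k ∈ s, T ≤ |y - k|) :
    ∑' k : s, f k ≤ C * exp μ * (∑' k : ℤ, exp (-(μ * |(k : ℝ)|))) * exp (-(μ * T)) := by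
  have hC : 0 ≤ C := nonneg_of_mul_nonneg_left ((hf0 0).trans (hf 0)) (exp_pos _)
  set h : ℤ → ℝ := fun k => C * exp (-(μ * T)) * exp (-(μ * |y - k|))
  have hh : Summable h := (summable_exp_neg_mul_abs_sub hμ y).mul_left _
  have hfh : ∀ k ∈ s, f k ≤ h k := by
    intro k hk
    refine (hf k).trans ?_
    simp only [h, mul_assoc C, ← exp_add]
    exact mul_le_mul_of_nonneg_left (exp_le_exp.2 (by nlinarith [hs k hk])) hC
  calc ∑' k : s, f k ≤ ∑' k : s, h k :=
        Summable.tsum_le_tsum (fun k => hfh k k.2)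
          ((hh.subtype s).of_nonneg_of_le (fun k => hf0 k) fun k => hfh k k.2) (hh.subtype s)
    _ ≤ ∑' k, h k := Summable.tsum_subtype_le h s (fun k => by positivity) hh
    _ = C * exp (-(μ * T)) * ∑' k : ℤ, exp (-(μ * |y - k|)) := tsum_mul_left
    _ ≤ C * exp (-(μ * T)) * (exp μ * ∑' k : ℤ, exp (-(μ * |(k : ℝ)|))) := by
        gcongr
        exact tsum_exp_neg_mul_abs_sub_le hμ y
    _ = C * exp μ * (∑' k : ℤ, exp (-(μ * |(k : ℝ)|))) * exp (-(μ * T)) := by ring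

end ExpTail

lemma rpow_one_sub_le_abs_mul_sub {n β a x : ℝ} (hn : 0 < n) (h : 1 / n ^ β ≤ |a / n - x|) :
    n ^ (1 - β) ≤ |n * x - a| :=
  calc n ^ (1 - β) = n * (1 / n ^ β) := by rw [rpow_sub hn, rpow_one]; ring
    _ ≤ n * |a / n - x| := by gcongr
    _ = |n * x - a| := by
        rw [abs_sub_comm (n * x), show a - n * x = n * (a / n - x) by field_simp, abs_mul,
          abs_of_pos hn]

lemma tendsto_exp_neg_mul_natCast_rpow {μ p : ℝ} (hμ : 0 < μ) (hp : 0 < p) :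
    Tendsto (fun n : ℕ => exp (-(μ * (n : ℝ) ^ p))) atTop (nhds 0) :=
  tendsto_exp_atBot.comp <| tendsto_neg_atTop_atBot.comp <|
    ((tendsto_rpow_atTop hp).comp tendsto_natCast_atTop_atTop).const_mul_atTop hμ

open Filter in
theorem Phi_tail_sum_general (q lam : ℝ) (hq : 0 < q) (hlam : 0 < lam)
    (x : ℝ) (β : ℝ) (hβ1 : β < 1) :
    (∃ A : ℝ, 0 < A ∧ ∀ n : ℕ, 1 ≤ n →
      (∑' k : {k : ℤ // (1 : ℝ) / (n : ℝ) ^ β ≤ |(k : ℝ) / n - x|},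
          Phi q lam (n * x - (k : ℤ))) ≤
        A * ((q + 1 / q) / 2 * Real.exp (2 * lam) *
          Real.exp (-lam * ((n : ℝ) ^ (1 - β) - 1)) / (1 - Real.exp (-lam)))) ∧
    Tendsto (fun n : ℕ =>
        ∑' k : {k : ℤ // (1 : ℝ) / (n : ℝ) ^ β ≤ |(k : ℝ) / n - x|},
          Phi q lam (n * x - (k : ℤ))) atTop (nhds 0) := by
  set K := (q + 1 / q) / 4 * exp (2 * lam) * exp lam * ∑' k : ℤ, exp (-(lam * |(k : ℝ)|))
  have hK : 0 < K := by
    have := (summable_exp_neg_mul_abs_int hlam).tsum_pos (fun _ => (exp_pos _).le) 0 (exp_pos _)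
    positivity
  have hbound : ∀ n : ℕ, 1 ≤ n →
      ∑' k : {k : ℤ // (1 : ℝ) / (n : ℝ) ^ β ≤ |(k : ℝ) / n - x|}, Phi q lam (n * x - (k : ℤ)) ≤
        K * exp (-(lam * (n : ℝ) ^ (1 - β))) := fun n hn =>
    tsum_subtype_le_of_le_exp_neg_two_mul hlam (fun _ => Phi_nonneg q lam _ hq hlam.le)
      (fun _ => Phi_le q lam _ hq) {k : ℤ | (1 : ℝ) / (n : ℝ) ^ β ≤ |(k : ℝ) / n - x|}
      fun _ hk => rpow_one_sub_le_abs_mul_sub (by exact_mod_cast hn) hk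
  have hE : 0 < 1 - exp (-lam) := sub_pos.2 (exp_lt_one_iff.2 (by linarith))
  refine ⟨⟨K * (1 - exp (-lam)) / ((q + 1 / q) / 2 * exp (2 * lam) * exp lam), by positivity,
    fun n hn => (hbound n hn).trans_eq ?_⟩, ?_⟩
  · rw [show -lam * ((n : ℝ) ^ (1 - β) - 1) = lam + -(lam * (n : ℝ) ^ (1 - β)) by ring, exp_add]
    field_simp
  · refine squeeze_zero' (Eventually.of_forall fun n => tsum_nonneg fun _ =>
      Phi_nonneg q lam _ hq hlam.le) (eventually_atTop.2 ⟨1, hbound⟩) ?_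
    simpa using (tendsto_exp_neg_mul_natCast_rpow hlam (sub_pos.2 hβ1)).const_mul K

open Filter in
theorem Phi_tail_sum (q lam : ℝ) (hq : 0 < q) (hlam : 0 < lam)
    (x : ℝ) (β : ℝ) (hβ : 0 < β) (hβ1 : β < 1) :
    (∃ A : ℝ, 0 < A ∧ ∀ n : ℕ, 1 ≤ n →
      (∑' k : {k : ℤ // (1 : ℝ) / (n : ℝ) ^ β ≤ |(k : ℝ) / n - x|},
          Phi q lam (n * x - (k : ℤ))) ≤
        A * ((q + 1 / q) / 2 * Real.exp (2 * lam) *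
          Real.exp (-lam * ((n : ℝ) ^ (1 - β) - 1)) / (1 - Real.exp (-lam)))) ∧
    Tendsto (fun n : ℕ =>
        ∑' k : {k : ℤ // (1 : ℝ) / (n : ℝ) ^ β ≤ |(k : ℝ) / n - x|},
          Phi q lam (n * x - (k : ℤ))) atTop (nhds 0) :=
  Phi_tail_sum_general q lam hq hlam x β hβ1
end

section
/- Suppose Φ : ℝ → ℝ is nonnegative with ∑_{k∈ℤ} Φ(u − k) = 1 for all u ∈ ℝ, and f : ℝ → ℝ is uniformly continuous and bounded. Then the Kantorovich operator C_n(f,x) := ∑_{k∈ℤ} (n ∫_0^{1/n} f(t + k/n) dt) Φ(nx − k) satisfies ‖C_n(f, ·) − B_n(f, ·)‖_∞ ≤ ω(f, 1/n), where ω is the modulus of continuity and B_n(f,x) := ∑_{k∈ℤ} f(k/n) Φ(nx − k). -/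
noncomputable def modulus (f : ℝ → ℝ) (δ : ℝ) : ℝ :=
  sSup {d : ℝ | ∃ u v : ℝ, |u - v| ≤ δ ∧ d = |f u - f v|}

/-!
Both operators average against the same weights `Φ (n x - k)`, which are nonnegative and sum to
`1`. The `k`-th Kantorovich coefficient is the mean of `f` over `[k/n, (k+1)/n]`, so it differs from
the `k`-th basic coefficient `f (k/n)` by at most `ω(f, 1/n)`, and a convex combination of such
differences is again at most `ω(f, 1/n)`.
-/

open Set

theorem abs_sub_le_modulus {f : ℝ → ℝ} (hf : BddAbove (range fun y => |f y|)) {δ u v : ℝ}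
    (huv : |u - v| ≤ δ) : |f u - f v| ≤ modulus f δ := by
  obtain ⟨M, hM⟩ := hf
  refine le_csSup ⟨M + M, ?_⟩ ⟨u, v, huv, rfl⟩
  rintro _ ⟨u, v, -, rfl⟩
  exact (abs_sub _ _).trans (add_le_add (hM ⟨u, rfl⟩) (hM ⟨v, rfl⟩))

theorem abs_inv_mul_integral_sub_le_modulus {f : ℝ → ℝ} (hfc : Continuous f)
    (hfb : BddAbove (range fun y => |f y|)) {δ : ℝ} (hδ : 0 < δ) (a : ℝ) :
    |δ⁻¹ * (∫ t in (0 : ℝ)..δ, f (t + a)) - f a| ≤ modulus f δ := by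
  have hint : IntervalIntegrable (fun t => f (t + a)) MeasureTheory.volume 0 δ :=
    (hfc.comp (continuous_add_const a)).intervalIntegrable _ _
  have hosc : ∀ t ∈ uIoc 0 δ, ‖f (t + a) - f a‖ ≤ modulus f δ := by
    intro t ht
    rw [uIoc_of_le hδ.le] at ht
    refine abs_sub_le_modulus hfb ?_
    rw [add_sub_cancel_right, abs_of_pos ht.1]
    exact ht.2
  calc |δ⁻¹ * (∫ t in (0 : ℝ)..δ, f (t + a)) - f a|
      = |δ⁻¹ * ∫ t in (0 : ℝ)..δ, (f (t + a) - f a)| := by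
        rw [intervalIntegral.integral_sub hint intervalIntegrable_const,
          intervalIntegral.integral_const, smul_eq_mul, sub_zero, mul_sub, ← mul_assoc,
          inv_mul_cancel₀ hδ.ne', one_mul]
    _ = δ⁻¹ * ‖∫ t in (0 : ℝ)..δ, (f (t + a) - f a)‖ := by
        rw [abs_mul, abs_of_pos (inv_pos.2 hδ), Real.norm_eq_abs]
    _ ≤ δ⁻¹ * (modulus f δ * |δ - 0|) := by
        gcongr
        exact intervalIntegral.norm_integral_le_of_norm_le_const hosc
    _ = modulus f δ := by
        rw [sub_zero, abs_of_pos hδ]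
        field_simp

theorem abs_tsum_mul_sub_tsum_mul_le {ι : Type*} {w a b : ι → ℝ} {C : ℝ} (hw₀ : ∀ k, 0 ≤ w k)
    (hw : HasSum w 1) (hb : Summable fun k => b k * w k) (hab : ∀ k, |a k - b k| ≤ C) :
    |∑' k, a k * w k - ∑' k, b k * w k| ≤ C := by
  have hdiff : ∀ k, ‖(a k - b k) * w k‖ ≤ C * w k := fun k => by
    rw [Real.norm_eq_abs, abs_mul, abs_of_nonneg (hw₀ k)]
    exact mul_le_mul_of_nonneg_right (hab k) (hw₀ k)
  have hd : Summable fun k => (a k - b k) * w k := hw.summable.mul_left C |>.of_norm_bounded hdiff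
  have ha : Summable fun k => a k * w k := by
    simpa only [sub_mul, sub_add_cancel] using hd.add hb
  calc |∑' k, a k * w k - ∑' k, b k * w k| = ‖∑' k, (a k - b k) * w k‖ := by
        simp only [sub_mul, Real.norm_eq_abs, ha.tsum_sub hb]
    _ ≤ C * 1 := tsum_of_norm_bounded (hw.mul_left C) hdiff
    _ = C := mul_one C

theorem kantorovich_vs_basic (Φ : ℝ → ℝ) (hΦ : ∀ y, 0 ≤ Φ y)
    (hPU : ∀ u : ℝ, HasSum (fun k : ℤ => Φ (u - k)) 1)
    (f : ℝ → ℝ) (hfu : UniformContinuous f)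
    (hfb : BddAbove (Set.range fun y => |f y|)) :
    ∀ (n : ℕ), 1 ≤ n → ∀ x : ℝ,
      |(∑' k : ℤ, (n * ∫ t in (0 : ℝ)..(1 / n), f (t + (k : ℝ) / n)) * Φ (n * x - k)) -
          ∑' k : ℤ, f ((k : ℝ) / n) * Φ (n * x - k)| ≤
        modulus f (1 / n) := by
  intro n hn x
  have hδ : (0 : ℝ) < 1 / n := by positivity
  have ⟨M, hM⟩ := hfb
  have hbasic : Summable fun k : ℤ => f (k / n) * Φ (n * x - k) :=
    (hPU _).summable.mul_left M |>.of_norm_bounded fun k => by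
      rw [Real.norm_eq_abs, abs_mul, abs_of_nonneg (hΦ _)]
      exact mul_le_mul_of_nonneg_right (hM ⟨_, rfl⟩) (hΦ _)
  refine abs_tsum_mul_sub_tsum_mul_le (fun k => hΦ _) (hPU _) hbasic fun k => ?_
  simpa only [one_div, inv_inv] using
    abs_inv_mul_integral_sub_le_modulus hfu.continuous hfb hδ (k / n)
end
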